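/- Let (θ, S, X) be an ample dynamical system. There is an injective algebra homomorphism φ: L_c(X) → L_c(X) ⋊ S such that φ(f) = f Δ_e whenever e ∈ E(S) and f ∈ L_c(X_e). -/

import Mathlib

/-- An inverse semigroup: a semigroup with an involution `star` such that
`a (star a) a = a`, `(star a) a (star a) = star a`, and idempotents commute. -/
class InverseSemigroup (S : Type*) extends Semigroup S, Star S where
  star_star : ∀ a : S, star (star a) = a
  mul_star_mul : ∀ a : S, a * star a * a = a
  star_mul_star : ∀ a : S, star a * a * star a = star a
  star_mul : ∀ a b : S, star (a * b) = star b * star a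
  idem_comm : ∀ e f : S, e * e = e → f * f = f → e * f = f * e

/-- The natural partial order on an inverse semigroup: `s ≤ t` iff `s = t e`
for some idempotent `e`. -/
def ISle {S : Type*} [InverseSemigroup S] (s t : S) : Prop :=
  ∃ e : S, e * e = e ∧ s = t * e

/-- An ample action of an inverse semigroup `S` on a topological space `X`:
a semigroup homomorphism `s ↦ θ s` into partial homeomorphisms between clopen
subsets of `X` (composition with largest domains encoded via
`PartialEquiv.trans` and `EqOnSource`), with `θ (star s) = (θ s).symm`, whose
domains cover `X`.  (For an ample dynamical system, `X` is moreover assumed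
locally compact, Hausdorff and totally disconnected.) -/
structure AmpleSystem (S X : Type*) [InverseSemigroup S] [TopologicalSpace X] where
  θ : S → PartialHomeomorph X X
  hom : ∀ s t : S, (θ (s * t)).toPartialEquiv.EqOnSource
    ((θ t).toPartialEquiv.trans (θ s).toPartialEquiv)
  star_eq : ∀ s : S, (θ (star s)).toPartialEquiv.EqOnSource (θ s).toPartialEquiv.symm
  clopen : ∀ s : S, IsClopen (θ s).source
  cover : ∀ x : X, ∃ s : S, x ∈ (θ s).source

variable (K : Type*) [Field K]

/-- `L_c(X)`: the locally constant, compactly supported `K`-valued functions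
on `X` (a non-unital commutative `K`-algebra under pointwise operations). -/
def LcSet (X : Type*) [TopologicalSpace X] : Set (X → K) :=
  {f | IsLocallyConstant f ∧ HasCompactSupport f}

variable {S X : Type*} [InverseSemigroup S] [TopologicalSpace X]

/-- The globally defined endomorphism `ᾱ_s` of `L_c(X)`:
`ᾱ_s(f) = α_s(f · 1_{X_{s*s}})`, i.e. `(ᾱ_s f)(x) = f (θ_{s*} x)` for
`x ∈ X_{s s*}` and `0` otherwise. -/
noncomputable def barAlpha (T : AmpleSystem S X) (s : S) (f : X → K) : X → K :=
  (T.θ s).target.indicator (fun x => f ((T.θ s).symm x))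

/-- The fiber `B_s = L_c(X_{s s*})` of the semi-direct product bundle:
elements of `L_c(X)` vanishing outside `X_{s s*} = ran θ_s`. -/
def FibSet (T : AmpleSystem S X) (s : S) : Set (X → K) :=
  {f | f ∈ LcSet K X ∧ ∀ x ∉ (T.θ s).target, f x = 0}

/-- `L_c(X_e)` for an idempotent `e`: elements of `L_c(X)` vanishing outside
`X_e = dom θ_e`. -/
def LcE (T : AmpleSystem S X) (e : S) : Set (X → K) :=
  {f | f ∈ LcSet K X ∧ ∀ x ∉ (T.θ e).source, f x = 0}

/-- A covariant representation `(π, σ)` of an ample dynamical system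
`(θ, S, X)` on a `K`-vector space `V`: a non-degenerate representation `π` of
`L_c(X)` and a semigroup homomorphism `σ : S → End(V)` with
`π (α_s f) = σ_s π(f) σ_{s*}` for `f ∈ L_c(X_{s*s})`, and
`span {π(f) ξ : f ∈ L_c(X_e)} = σ_e(V)` for each idempotent `e`.
(`π` is recorded as a map on all of `X → K`; only its values on `L_c(X)` are
constrained.) -/
structure CovRep (T : AmpleSystem S X) (V : Type*) [AddCommGroup V]
    [Module K V] where
  π : (X → K) → Module.End K V
  σ : S → Module.End K V
  π_add : ∀ f ∈ LcSet K X, ∀ g ∈ LcSet K X, π (f + g) = π f + π g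
  π_smul : ∀ (c : K), ∀ f ∈ LcSet K X, π (c • f) = c • π f
  π_mul : ∀ f ∈ LcSet K X, ∀ g ∈ LcSet K X, π (f * g) = π f * π g
  π_nondeg : Submodule.span K {ξ : V | ∃ f ∈ LcSet K X, ∃ η : V, ξ = π f η} = ⊤
  σ_hom : ∀ s t : S, σ (s * t) = σ s * σ t
  covariant : ∀ s : S, ∀ f ∈ LcE K T (star s * s),
    π (barAlpha K T s f) = σ s * π f * σ (star s)
  essential : ∀ e : S, e * e = e →
    Submodule.span K {ξ : V | ∃ f ∈ LcE K T e, ∃ η : V, ξ = π f η} =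
      LinearMap.range (σ e)

/-- The defining relations of the crossed product `L_c(X) ⋊ S`, imposed on the
free `K`-algebra on formal symbols `f δ_s` (`s ∈ S`, `f : X → K`): symbols with
`f ∉ L_c(X_{s s*})` are discarded, the symbols are `K`-linear in `f` on each
fiber, `(f δ_s)(g δ_t) = f ᾱ_s(g) δ_{s t}`, and `f δ_s = f δ_t` whenever
`s ≤ t` and `f ∈ L_c(X_{s s*})`.  The quotient is precisely the universal
(cross-sectional) algebra of the semi-direct product bundle `B^θ`. -/
inductive CPRel {S X : Type*} [InverseSemigroup S] [TopologicalSpace X]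
    (K : Type*) [Field K] (T : AmpleSystem S X) :
    FreeAlgebra K (S × (X → K)) → FreeAlgebra K (S × (X → K)) → Prop
  | zero (s : S) (f : X → K) : f ∉ FibSet K T s →
      CPRel K T (FreeAlgebra.ι K (s, f)) 0
  | add (s : S) (f g : X → K) : f ∈ FibSet K T s → g ∈ FibSet K T s →
      CPRel K T (FreeAlgebra.ι K (s, f + g))
        (FreeAlgebra.ι K (s, f) + FreeAlgebra.ι K (s, g))
  | smul (s : S) (c : K) (f : X → K) : f ∈ FibSet K T s →
      CPRel K T (FreeAlgebra.ι K (s, c • f)) (c • FreeAlgebra.ι K (s, f))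
  | mul (s t : S) (f g : X → K) : f ∈ FibSet K T s → g ∈ FibSet K T t →
      CPRel K T (FreeAlgebra.ι K (s, f) * FreeAlgebra.ι K (t, g))
        (FreeAlgebra.ι K (s * t, f * barAlpha K T s g))
  | incl (s t : S) (f : X → K) : ISle s t → f ∈ FibSet K T s →
      CPRel K T (FreeAlgebra.ι K (s, f)) (FreeAlgebra.ι K (t, f))

/-- The crossed product algebra `L_c(X) ⋊ S` of an ample dynamical system. -/
abbrev CP {S X : Type*} [InverseSemigroup S] [TopologicalSpace X]
    (K : Type*) [Field K] (T : AmpleSystem S X) :=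
  RingQuot (CPRel K T)

/-- The element `f Δ_s` of the crossed product `L_c(X) ⋊ S`. -/
noncomputable def Delta {S X : Type*} [InverseSemigroup S] [TopologicalSpace X]
    (K : Type*) [Field K] (T : AmpleSystem S X) (s : S) (f : X → K) :
    CP K T :=
  RingQuot.mkAlgHom K (CPRel K T) (FreeAlgebra.ι K (s, f))

/-!
Every `f ∈ L_c(X)` is a finite sum of pieces `g_i ∈ L_c(X_{e_i})` with `e_i` idempotent, since
the clopen sets `X_e` cover the compact support of `f`; set `φ f = ∑ g_i Δ_{e_i}`. This does not
depend on the decomposition: if `u_k ∈ L_c(X_{d_k})` add up to the indicator of a compact clopen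
set carrying every `g_i`, the relation `g Δ_e = g Δ_{e'}` for `g ∈ L_c(X_e) ∩ L_c(X_{e'})` rewrites
`∑ g_i Δ_{e_i}` as `∑ (f u_k) Δ_{d_k}`. Additivity and multiplicativity then come from
`(f Δ_e)(g Δ_{e'}) = (f g) Δ_{e e'}`. For injectivity, `L_c(X) ⋊ S` acts on all functions `X → K`,
`f Δ_s` acting by `ξ ↦ f · ᾱ_s ξ`, and `φ f` sends the constant function `1` to `f`.
-/

open Set Function

namespace InverseSemigroup

variable {S : Type*} [InverseSemigroup S]

theorem star_eq_self_of_isIdempotentElem {e : S} (he : IsIdempotentElem e) : star e = e := by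
  have hstar : IsIdempotentElem (star e) := by
    rw [IsIdempotentElem, ← InverseSemigroup.star_mul, he.eq]
  have hc : e * star e = star e * e := idem_comm e (star e) he hstar
  calc star e = star e * e * star e := (star_mul_star e).symm
    _ = star e * e := by rw [mul_assoc, hc, ← mul_assoc, hstar.eq]
    _ = e * star e * e := by rw [hc, mul_assoc, he.eq]
    _ = e := mul_star_mul e

theorem isIdempotentElem_star_mul_self (s : S) : IsIdempotentElem (star s * s) := by
  rw [IsIdempotentElem, ← mul_assoc, star_mul_star]

theorem isIdempotentElem_mul {e f : S} (he : IsIdempotentElem e) (hf : IsIdempotentElem f) :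
    IsIdempotentElem (e * f) :=
  he.mul_of_commute (idem_comm e f he hf) hf

end InverseSemigroup

open InverseSemigroup

namespace AmpleSystem

variable {S X : Type*} [InverseSemigroup S] [TopologicalSpace X] (T : AmpleSystem S X)

theorem source_star (s : S) : (T.θ (star s)).source = (T.θ s).target :=
  (T.star_eq s).source_eq

theorem isClopen_target (s : S) : IsClopen (T.θ s).target :=
  T.source_star s ▸ T.clopen (star s)

theorem target_eq_source {e : S} (he : IsIdempotentElem e) :
    (T.θ e).target = (T.θ e).source := by
  rw [← T.source_star e, star_eq_self_of_isIdempotentElem he]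

theorem apply_eq_self {e : S} (he : IsIdempotentElem e) {x : X} (hx : x ∈ (T.θ e).source) :
    T.θ e x = x := by
  have hθx : T.θ e x ∈ (T.θ e).source := T.target_eq_source he ▸ (T.θ e).map_source hx
  have h := T.hom e e
  rw [he.eq] at h
  exact (T.θ e).injOn hθx hx (h.eqOn hx).symm

theorem symm_apply_eq_self {e : S} (he : IsIdempotentElem e) {x : X}
    (hx : x ∈ (T.θ e).source) : (T.θ e).symm x = x := by
  conv_lhs => rw [← T.apply_eq_self he hx]
  exact (T.θ e).left_inv hx

theorem source_mul_of_isIdempotentElem (e : S) {f : S} (hf : IsIdempotentElem f) :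
    (T.θ (e * f)).source = (T.θ e).source ∩ (T.θ f).source := by
  rw [(T.hom e f).source_eq, PartialEquiv.trans_source]
  ext x
  exact and_comm.trans (and_congr_left fun hxf => by simp [T.apply_eq_self hf hxf])

theorem source_star_mul_self (s : S) : (T.θ (star s * s)).source = (T.θ s).source := by
  rw [(T.hom (star s) s).source_eq, PartialEquiv.trans_source, T.source_star]
  exact inter_eq_left.2 fun x hx => (T.θ s).map_source hx

theorem target_mul (s t : S) :
    (T.θ (s * t)).target = (T.θ s).target ∩ (T.θ s).symm ⁻¹' (T.θ t).target :=
  (T.hom s t).target_eq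

theorem symm_mul_apply (s t : S) {x : X} (hx : x ∈ (T.θ (s * t)).target) :
    (T.θ (s * t)).symm x = (T.θ t).symm ((T.θ s).symm x) :=
  (T.hom s t).symm'.eqOn hx

theorem target_subset_of_le {s t : S} (h : ISle s t) : (T.θ s).target ⊆ (T.θ t).target := by
  obtain ⟨e, -, rfl⟩ := h
  rw [T.target_mul]
  exact inter_subset_left

theorem symm_apply_of_le {s t : S} (h : ISle s t) {x : X} (hx : x ∈ (T.θ s).target) :
    (T.θ s).symm x = (T.θ t).symm x := by
  obtain ⟨e, he, rfl⟩ := h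
  rw [T.symm_mul_apply t e hx, T.symm_apply_eq_self he]
  rw [T.target_mul] at hx
  exact T.target_eq_source he ▸ hx.2

end AmpleSystem

section CrossedProduct

variable {K S X : Type*} [Field K] [InverseSemigroup S] [TopologicalSpace X]

theorem isLocallyConstant_indicator {M : Type*} [Zero M] {U : Set X} (hU : IsClopen U)
    {f : X → M} (hf : IsLocallyConstant f) : IsLocallyConstant (U.indicator f) :=
  (LocallyConstant.indicator ⟨f, hf⟩ hU).isLocallyConstant

namespace LcSet

theorem zero_mem : (0 : X → K) ∈ LcSet K X :=
  ⟨IsLocallyConstant.const 0, HasCompactSupport.zero⟩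

theorem add_mem {f g : X → K} (hf : f ∈ LcSet K X) (hg : g ∈ LcSet K X) :
    f + g ∈ LcSet K X :=
  ⟨hf.1.add hg.1, hf.2.add hg.2⟩

theorem mul_mem_left {a b : X → K} (ha : IsLocallyConstant a) (hb : b ∈ LcSet K X) :
    a * b ∈ LcSet K X :=
  ⟨ha.mul hb.1, hb.2.mul_left⟩

theorem mul_mem_right {a b : X → K} (ha : a ∈ LcSet K X) (hb : IsLocallyConstant b) :
    a * b ∈ LcSet K X :=
  ⟨ha.1.mul hb, ha.2.mul_right⟩

theorem smul_mem (c : K) {f : X → K} (hf : f ∈ LcSet K X) : c • f ∈ LcSet K X :=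
  mul_mem_left (IsLocallyConstant.const c) hf

theorem indicator_mem {U : Set X} (hU : IsClopen U) {f : X → K} (hf : f ∈ LcSet K X) :
    U.indicator f ∈ LcSet K X :=
  ⟨isLocallyConstant_indicator hU hf.1,
    hf.2.mono (support_indicator.trans_subset inter_subset_right)⟩

theorem indicator_one_mem {C : Set X} (hC : IsClopen C) (hC' : IsCompact C) :
    C.indicator 1 ∈ LcSet K X :=
  ⟨isLocallyConstant_indicator hC IsLocallyConstant.one,
    HasCompactSupport.intro' hC' hC.isClosed fun _ hx => indicator_of_notMem hx 1⟩

theorem isClopen_support {f : X → K} (hf : f ∈ LcSet K X) : IsClopen (support f) :=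
  (hf.1.isClopen_fiber 0).compl

theorem isCompact_support {f : X → K} (hf : f ∈ LcSet K X) : IsCompact (support f) :=
  hf.2.isCompact.of_isClosed_subset (isClopen_support hf).isClosed (subset_tsupport f)

end LcSet

variable (T : AmpleSystem S X)

theorem barAlpha_of_isIdempotentElem {e : S} (he : IsIdempotentElem e) (f : X → K) :
    barAlpha K T e f = (T.θ e).source.indicator f := by
  ext x
  by_cases hx : x ∈ (T.θ e).source
  · simp [barAlpha, T.target_eq_source he, hx, T.symm_apply_eq_self he hx]
  · simp [barAlpha, T.target_eq_source he, hx]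

theorem barAlpha_mul (s : S) (f g : X → K) :
    barAlpha K T s (f * g) = barAlpha K T s f * barAlpha K T s g :=
  indicator_mul _ _ _

theorem barAlpha_barAlpha (s t : S) (f : X → K) :
    barAlpha K T s (barAlpha K T t f) = barAlpha K T (s * t) f := by
  ext x
  by_cases hs : x ∈ (T.θ s).target
  · by_cases ht : (T.θ s).symm x ∈ (T.θ t).target
    · have hst : x ∈ (T.θ (s * t)).target := by rw [T.target_mul]; exact ⟨hs, ht⟩
      simp [barAlpha, hs, ht, hst, T.symm_mul_apply s t hst]
    · have hst : x ∉ (T.θ (s * t)).target := by rw [T.target_mul]; exact fun h => ht h.2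
      simp [barAlpha, hs, ht, hst]
  · have hst : x ∉ (T.θ (s * t)).target := by rw [T.target_mul]; exact fun h => hs h.1
    simp [barAlpha, hs, hst]

theorem isLocallyConstant_barAlpha (s : S) {f : X → K} (hf : IsLocallyConstant f) :
    IsLocallyConstant (barAlpha K T s f) := by
  refine IsLocallyConstant.iff_isOpen_fiber.2 fun y => ?_
  rw [barAlpha, indicator_preimage, Set.ite, Set.sdiff_eq, inter_comm]
  exact ((T.θ s).continuousOn_symm.isOpen_inter_preimage (T.isClopen_target s).isOpen
    (hf.isOpen_fiber y)).union ((IsLocallyConstant.const 0).isOpen_fiber y |>.inter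
      (T.isClopen_target s).compl.isOpen)

noncomputable def barAlphaₗ (s : S) : (X → K) →ₗ[K] (X → K) where
  toFun := barAlpha K T s
  map_add' _ _ := indicator_add _ _ _
  map_smul' c f := indicator_const_smul (T.θ s).target c fun x => f ((T.θ s).symm x)

variable {T}

theorem FibSet.zero_mem (s : S) : (0 : X → K) ∈ FibSet K T s :=
  ⟨LcSet.zero_mem, fun _ _ => rfl⟩

theorem FibSet.add_mem {s : S} {f g : X → K} (hf : f ∈ FibSet K T s) (hg : g ∈ FibSet K T s) :
    f + g ∈ FibSet K T s :=
  ⟨LcSet.add_mem hf.1 hg.1, fun x hx => by simp [hf.2 x hx, hg.2 x hx]⟩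

theorem FibSet.smul_mem {s : S} (c : K) {f : X → K} (hf : f ∈ FibSet K T s) :
    c • f ∈ FibSet K T s :=
  ⟨LcSet.smul_mem c hf.1, fun x hx => by simp [hf.2 x hx]⟩

theorem FibSet.sum_mem {s : S} {ι : Type*} (u : Finset ι) {g : ι → X → K}
    (hg : ∀ i ∈ u, g i ∈ FibSet K T s) : ∑ i ∈ u, g i ∈ FibSet K T s :=
  Finset.sum_induction g (· ∈ FibSet K T s) (fun _ _ => FibSet.add_mem) (FibSet.zero_mem s) hg

theorem FibSet.mul_barAlpha_mem {s t : S} {f g : X → K} (hf : f ∈ FibSet K T s)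
    (hg : g ∈ FibSet K T t) : f * barAlpha K T s g ∈ FibSet K T (s * t) := by
  refine ⟨LcSet.mul_mem_right hf.1 (isLocallyConstant_barAlpha T s hg.1.1), fun x hx => ?_⟩
  rw [T.target_mul, mem_inter_iff, not_and_or] at hx
  rcases hx with hs | ht
  · simp [hf.2 x hs]
  · by_cases hs : x ∈ (T.θ s).target
    · simp [barAlpha, hs, hg.2 _ ht]
    · simp [hf.2 x hs]

theorem FibSet.mono {s t : S} (h : ISle s t) {f : X → K} (hf : f ∈ FibSet K T s) :
    f ∈ FibSet K T t :=
  ⟨hf.1, fun x hx => hf.2 x fun hs => hx (T.target_subset_of_le h hs)⟩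

theorem mem_FibSet_of_mem_LcE {e : S} (he : IsIdempotentElem e) {f : X → K}
    (hf : f ∈ LcE K T e) : f ∈ FibSet K T e :=
  ⟨hf.1, T.target_eq_source he ▸ hf.2⟩

theorem LcE.mul_mem_left {e : S} {a f : X → K} (ha : IsLocallyConstant a) (hf : f ∈ LcE K T e) :
    a * f ∈ LcE K T e :=
  ⟨LcSet.mul_mem_left ha hf.1, fun x hx => by simp [hf.2 x hx]⟩

theorem LcE.mul_mem_right {e : S} {f a : X → K} (hf : f ∈ LcE K T e) (ha : IsLocallyConstant a) :
    f * a ∈ LcE K T e :=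
  mul_comm a f ▸ LcE.mul_mem_left ha hf

theorem LcE_mul (e : S) {f : S} (hf : IsIdempotentElem f) :
    LcE K T (e * f) = LcE K T e ∩ LcE K T f := by
  ext g
  simp only [LcE, T.source_mul_of_isIdempotentElem e hf, mem_inter_iff, not_and_or,
    mem_ofPred_eq]
  grind

variable (T)

theorem Delta_add (s : S) {f g : X → K} (hf : f ∈ FibSet K T s) (hg : g ∈ FibSet K T s) :
    Delta K T s (f + g) = Delta K T s f + Delta K T s g := by
  have h := RingQuot.mkAlgHom_rel K (CPRel.add s f g hf hg)
  rw [map_add] at h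
  exact h

theorem Delta_smul (s : S) (c : K) {f : X → K} (hf : f ∈ FibSet K T s) :
    Delta K T s (c • f) = c • Delta K T s f := by
  have h := RingQuot.mkAlgHom_rel K (CPRel.smul s c f hf)
  rw [map_smul] at h
  exact h

theorem Delta_zero (s : S) : Delta K T s 0 = 0 := by
  simpa using Delta_smul T s (0 : K) (FibSet.zero_mem s)

theorem Delta_sum (s : S) {ι : Type*} (u : Finset ι) {g : ι → X → K}
    (hg : ∀ i ∈ u, g i ∈ FibSet K T s) :
    Delta K T s (∑ i ∈ u, g i) = ∑ i ∈ u, Delta K T s (g i) := by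
  induction u using Finset.cons_induction with
  | empty => simpa using Delta_zero T s
  | cons a u ha ih =>
    rw [Finset.forall_mem_cons] at hg
    rw [Finset.sum_cons, Finset.sum_cons, Delta_add T s hg.1 (FibSet.sum_mem u hg.2), ih hg.2]

theorem Delta_congr {e e' : S} (he : IsIdempotentElem e) (he' : IsIdempotentElem e')
    {f : X → K} (hf : f ∈ LcE K T e) (hf' : f ∈ LcE K T e') :
    Delta K T e f = Delta K T e' f := by
  have hfib : f ∈ FibSet K T (e * e') :=
    mem_FibSet_of_mem_LcE (isIdempotentElem_mul he he') (by rw [LcE_mul e he']; exact ⟨hf, hf'⟩)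
  have hle : ISle (e * e') e := ⟨e', he', rfl⟩
  have hle' : ISle (e * e') e' := ⟨e, he, idem_comm e e' he he'⟩
  exact (RingQuot.mkAlgHom_rel K (CPRel.incl _ _ f hle hfib)).symm.trans
    (RingQuot.mkAlgHom_rel K (CPRel.incl _ _ f hle' hfib))

theorem Delta_mul_Delta {e e' : S} (he : IsIdempotentElem e) (he' : IsIdempotentElem e')
    {f g : X → K}
    (hf : f ∈ LcE K T e) (hg : g ∈ LcE K T e') :
    Delta K T e f * Delta K T e' g = Delta K T (e * e') (f * g) := by
  have hfg : f * barAlpha K T e g = f * g := by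
    rw [barAlpha_of_isIdempotentElem T he]
    ext x
    by_cases hx : x ∈ (T.θ e).source <;> simp [hx, hf.2 x]
  have h := RingQuot.mkAlgHom_rel K
    (CPRel.mul e e' f g (mem_FibSet_of_mem_LcE he hf) (mem_FibSet_of_mem_LcE he' hg))
  rw [map_mul, hfg] at h
  exact h

noncomputable def deltaOp (s : S) (f : X → K) : Module.End K (X → K) :=
  LinearMap.mulLeft K f ∘ₗ barAlphaₗ T s

theorem deltaOp_apply (s : S) (f ξ : X → K) : deltaOp T s f ξ = f * barAlpha K T s ξ := rfl

theorem deltaOp_add (s : S) (f g : X → K) :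
    deltaOp T s (f + g) = deltaOp T s f + deltaOp T s g :=
  LinearMap.ext fun _ => add_mul _ _ _

theorem deltaOp_smul (s : S) (c : K) (f : X → K) : deltaOp T s (c • f) = c • deltaOp T s f :=
  LinearMap.ext fun _ => smul_mul_assoc _ _ _

theorem deltaOp_mul (s t : S) (f g : X → K) :
    deltaOp T s f * deltaOp T t g = deltaOp T (s * t) (f * barAlpha K T s g) :=
  LinearMap.ext fun ξ => by
    simp only [Module.End.mul_apply, deltaOp_apply, barAlpha_mul, barAlpha_barAlpha, mul_assoc]

theorem deltaOp_of_le {s t : S} (h : ISle s t) {f : X → K} (hf : f ∈ FibSet K T s) :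
    deltaOp T s f = deltaOp T t f := by
  refine LinearMap.ext fun ξ => funext fun x => ?_
  by_cases hx : x ∈ (T.θ s).target
  · simp [deltaOp_apply, barAlpha, hx, T.target_subset_of_le h hx, T.symm_apply_of_le h hx]
  · simp [deltaOp_apply, hf.2 x hx]

open Classical in
noncomputable def deltaOpOfFib (p : S × (X → K)) : Module.End K (X → K) :=
  if p.2 ∈ FibSet K T p.1 then deltaOp T p.1 p.2 else 0

theorem lift_deltaOpOfFib_eq_of_cprel {a b : FreeAlgebra K (S × (X → K))} (h : CPRel K T a b) :
    FreeAlgebra.lift K (deltaOpOfFib T) a = FreeAlgebra.lift K (deltaOpOfFib T) b := by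
  cases h with
  | zero s f hf => simp [deltaOpOfFib, hf]
  | add s f g hf hg => simp [deltaOpOfFib, hf, hg, FibSet.add_mem hf hg, deltaOp_add]
  | smul s c f hf => simp [deltaOpOfFib, hf, FibSet.smul_mem c hf, deltaOp_smul]
  | mul s t f g hf hg =>
    simp [deltaOpOfFib, hf, hg, FibSet.mul_barAlpha_mem hf hg, deltaOp_mul]
  | incl s t f hle hf => simp [deltaOpOfFib, hf, FibSet.mono hle hf, deltaOp_of_le T hle hf]

noncomputable def regularRep : CP K T →ₐ[K] Module.End K (X → K) :=
  RingQuot.liftAlgHom K ⟨FreeAlgebra.lift K (deltaOpOfFib T),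
    fun _ _ h => lift_deltaOpOfFib_eq_of_cprel T h⟩

theorem regularRep_Delta_one {e : S} (he : IsIdempotentElem e) {f : X → K}
    (hf : f ∈ LcE K T e) : regularRep T (Delta K T e f) 1 = f := by
  have hfib := mem_FibSet_of_mem_LcE he hf
  rw [regularRep, Delta, RingQuot.liftAlgHom_mkAlgHom_apply]
  ext x
  by_cases hx : x ∈ (T.θ e).source
  · simp [deltaOpOfFib, hfib, deltaOp_apply, barAlpha_of_isIdempotentElem T he, hx]
  · simp [deltaOpOfFib, hfib, deltaOp_apply, barAlpha_of_isIdempotentElem T he, hx, hf.2 x hx]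

def IsLcEFamily {ι : Type*} (e : ι → S) (g : ι → X → K) : Prop :=
  ∀ i, IsIdempotentElem (e i) ∧ g i ∈ LcE K T (e i)

variable {T}

theorem IsLcEFamily.sumElim {ι κ : Type*} {e : ι → S} {g : ι → X → K} {e' : κ → S}
    {g' : κ → X → K} (h : IsLcEFamily T e g) (h' : IsLcEFamily T e' g') :
    IsLcEFamily T (Sum.elim e e') (Sum.elim g g')
  | .inl i => h i
  | .inr j => h' j

theorem IsLcEFamily.smul {ι : Type*} {e : ι → S} {g : ι → X → K} (h : IsLcEFamily T e g)
    (c : K) : IsLcEFamily T e (c • g) := fun i =>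
  ⟨(h i).1, LcE.mul_mem_left (IsLocallyConstant.const c) (h i).2⟩

theorem IsLcEFamily.mul {ι κ : Type*} {e : ι → S} {g : ι → X → K} {e' : κ → S}
    {g' : κ → X → K} (h : IsLcEFamily T e g) (h' : IsLcEFamily T e' g') :
    IsLcEFamily T (fun p : ι × κ => e p.1 * e' p.2) (fun p => g p.1 * g' p.2) := fun p => by
  refine ⟨isIdempotentElem_mul (h p.1).1 (h' p.2).1, ?_⟩
  rw [LcE_mul _ (h' p.2).1]
  exact ⟨LcE.mul_mem_right (h p.1).2 (h' p.2).2.1.1, LcE.mul_mem_left (h p.1).2.1.1 (h' p.2).2⟩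

theorem exists_isLcEFamily_sum_eq_of_support_subset (t : Finset S) :
    ∀ f ∈ LcSet K X, support f ⊆ ⋃ s ∈ t, (T.θ s).source →
      ∃ (n : ℕ) (e : Fin n → S) (g : Fin n → X → K), IsLcEFamily T e g ∧ ∑ i, g i = f := by
  induction t using Finset.cons_induction with
  | empty =>
    intro f _ hf
    refine ⟨0, Fin.elim0, Fin.elim0, fun i => i.elim0, ?_⟩
    simpa using (support_eq_empty_iff.1 (by simpa using hf)).symm
  | cons a t ha ih =>
    intro f hf hsupp
    obtain ⟨n, e, g, hg, hsum⟩ := ih ((T.θ a).sourceᶜ.indicator f)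
      (LcSet.indicator_mem (T.clopen a).compl hf) (by
        rw [support_indicator]
        rintro x ⟨hxU : x ∉ (T.θ a).source, hx⟩
        simpa [hxU] using hsupp hx)
    have hU : (T.θ a).source.indicator f ∈ LcE K T (star a * a) := by
      refine ⟨LcSet.indicator_mem (T.clopen a) hf, fun x hx => indicator_of_notMem ?_ f⟩
      rwa [T.source_star_mul_self] at hx
    refine ⟨n + 1, Fin.cons (star a * a) e, Fin.cons ((T.θ a).source.indicator f) g, ?_, ?_⟩
    · exact Fin.cases ⟨isIdempotentElem_star_mul_self a, hU⟩ hg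
    · rw [Fin.sum_cons, hsum, indicator_self_add_compl]

theorem exists_isLcEFamily_sum_eq {f : X → K} (hf : f ∈ LcSet K X) :
    ∃ (n : ℕ) (e : Fin n → S) (g : Fin n → X → K), IsLcEFamily T e g ∧ ∑ i, g i = f := by
  obtain ⟨t, ht⟩ := (LcSet.isCompact_support hf).elim_finite_subcover
    (fun s => (T.θ s).source) (fun s => (T.clopen s).isOpen)
    (fun x _ => mem_iUnion.2 (T.cover x))
  exact exists_isLcEFamily_sum_eq_of_support_subset t f hf ht

theorem exists_isLcEFamily_mul_sum_eq {ι : Type*} [Finite ι] {g : ι → X → K}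
    (hg : ∀ i, g i ∈ LcSet K X) :
    ∃ (n : ℕ) (d : Fin n → S) (u : Fin n → X → K), IsLcEFamily T d u ∧
      ∀ i, g i * ∑ k, u k = g i := by
  set C := ⋃ i, support (g i)
  have hC : C.indicator 1 ∈ LcSet K X := LcSet.indicator_one_mem
    (isClopen_iUnion_of_finite fun i => LcSet.isClopen_support (hg i))
    (isCompact_iUnion fun i => LcSet.isCompact_support (hg i))
  obtain ⟨n, d, u, hu, hsum⟩ := exists_isLcEFamily_sum_eq (T := T) hC
  refine ⟨n, d, u, hu, fun i => ?_⟩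
  ext x
  by_cases hx : x ∈ support (g i)
  · have hxC : x ∈ C := mem_iUnion_of_mem (s := fun i => support (g i)) i hx
    simp [hsum, hxC]
  · simp_all

theorem sum_Delta_eq_sum_Delta_mul {ι κ : Type*} [Fintype ι] [Fintype κ] {e : ι → S}
    {g : ι → X → K} {d : κ → S} {u : κ → X → K} (hg : IsLcEFamily T e g)
    (hu : IsLcEFamily T d u) (hunit : ∀ i, g i * ∑ k, u k = g i) :
    ∑ i, Delta K T (e i) (g i) = ∑ k, Delta K T (d k) ((∑ i, g i) * u k) := by
  have hmem : ∀ i k, g i * u k ∈ LcE K T (e i) ∧ g i * u k ∈ LcE K T (d k) := fun i k =>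
    ⟨LcE.mul_mem_right (hg i).2 (hu k).2.1.1, LcE.mul_mem_left (hg i).2.1.1 (hu k).2⟩
  calc ∑ i, Delta K T (e i) (g i)
      = ∑ i, ∑ k, Delta K T (e i) (g i * u k) := by
        refine Finset.sum_congr rfl fun i _ => ?_
        rw [← Delta_sum T _ _ fun k _ => mem_FibSet_of_mem_LcE (hg i).1 (hmem i k).1,
          ← Finset.mul_sum, hunit]
    _ = ∑ k, ∑ i, Delta K T (d k) (g i * u k) := by
        rw [Finset.sum_comm]
        exact Finset.sum_congr rfl fun k _ => Finset.sum_congr rfl fun i _ =>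
          Delta_congr T (hg i).1 (hu k).1 (hmem i k).1 (hmem i k).2
    _ = ∑ k, Delta K T (d k) ((∑ i, g i) * u k) := by
        refine Finset.sum_congr rfl fun k _ => ?_
        rw [Finset.sum_mul, Delta_sum T _ _ fun i _ => mem_FibSet_of_mem_LcE (hu k).1 (hmem i k).2]

theorem sum_Delta_eq_of_sum_eq {ι κ : Type*} [Fintype ι] [Fintype κ] {e : ι → S}
    {g : ι → X → K} {e' : κ → S} {g' : κ → X → K} (hg : IsLcEFamily T e g)
    (hg' : IsLcEFamily T e' g') (hsum : ∑ i, g i = ∑ j, g' j) :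
    ∑ i, Delta K T (e i) (g i) = ∑ j, Delta K T (e' j) (g' j) := by
  obtain ⟨n, d, u, hu, hunit⟩ := exists_isLcEFamily_mul_sum_eq (T := T) (g := Sum.elim g g')
    (Sum.rec (fun i => (hg i).2.1) (fun j => (hg' j).2.1))
  rw [sum_Delta_eq_sum_Delta_mul hg hu (fun i => hunit (.inl i)),
    sum_Delta_eq_sum_Delta_mul hg' hu (fun j => hunit (.inr j)), hsum]

variable (T)

def IsSumDelta (f : X → K) (a : CP K T) : Prop :=
  ∃ (n : ℕ) (e : Fin n → S) (g : Fin n → X → K),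
    IsLcEFamily T e g ∧ ∑ i, g i = f ∧ ∑ i, Delta K T (e i) (g i) = a

/-- Outside `L_c(X)` there is no decomposition and the value is arbitrary. -/
noncomputable def lcToCP (f : X → K) : CP K T :=
  Classical.epsilon (IsSumDelta T f)

variable {T}

theorem lcToCP_eq_sum {ι : Type*} [Fintype ι] {e : ι → S} {g : ι → X → K}
    (hg : IsLcEFamily T e g) : lcToCP T (∑ i, g i) = ∑ i, Delta K T (e i) (g i) := by
  let σ := Fintype.equivFin ι
  obtain ⟨n, e', g', hg', hsum, hval⟩ := Classical.epsilon_spec (p := IsSumDelta T (∑ i, g i))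
    ⟨_, Fintype.card ι, e ∘ σ.symm, g ∘ σ.symm, fun i => hg _, Equiv.sum_comp σ.symm g, rfl⟩
  rw [lcToCP, ← hval]
  exact sum_Delta_eq_of_sum_eq hg' hg hsum

theorem lcToCP_add {f g : X → K} (hf : f ∈ LcSet K X) (hg : g ∈ LcSet K X) :
    lcToCP T (f + g) = lcToCP T f + lcToCP T g := by
  obtain ⟨n, e, f', hf', rfl⟩ := exists_isLcEFamily_sum_eq (T := T) hf
  obtain ⟨m, e', g', hg', rfl⟩ := exists_isLcEFamily_sum_eq (T := T) hg
  have h := lcToCP_eq_sum (hf'.sumElim hg')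
  rw [Fintype.sum_sum_type, Fintype.sum_sum_type] at h
  simpa only [Sum.elim_inl, Sum.elim_inr, lcToCP_eq_sum hf', lcToCP_eq_sum hg'] using h

theorem lcToCP_smul (c : K) {f : X → K} (hf : f ∈ LcSet K X) :
    lcToCP T (c • f) = c • lcToCP T f := by
  obtain ⟨n, e, g, hg, rfl⟩ := exists_isLcEFamily_sum_eq (T := T) hf
  rw [Finset.smul_sum, lcToCP_eq_sum hg, Finset.smul_sum]
  refine (lcToCP_eq_sum (hg.smul c)).trans (Finset.sum_congr rfl fun i _ => ?_)
  exact Delta_smul T (e i) c (mem_FibSet_of_mem_LcE (hg i).1 (hg i).2)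

theorem lcToCP_mul {f g : X → K} (hf : f ∈ LcSet K X) (hg : g ∈ LcSet K X) :
    lcToCP T (f * g) = lcToCP T f * lcToCP T g := by
  obtain ⟨n, e, f', hf', rfl⟩ := exists_isLcEFamily_sum_eq (T := T) hf
  obtain ⟨m, e', g', hg', rfl⟩ := exists_isLcEFamily_sum_eq (T := T) hg
  rw [lcToCP_eq_sum hf', lcToCP_eq_sum hg', Finset.sum_mul_sum, Finset.sum_mul_sum,
    ← Finset.sum_product', ← Finset.sum_product', Finset.univ_product_univ]
  refine (lcToCP_eq_sum (hf'.mul hg')).trans (Finset.sum_congr rfl fun p _ => ?_)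
  exact (Delta_mul_Delta T (hf' p.1).1 (hg' p.2).1 (hf' p.1).2 (hg' p.2).2).symm

theorem lcToCP_of_mem_LcE {e : S} (he : IsIdempotentElem e) {f : X → K} (hf : f ∈ LcE K T e) :
    lcToCP T f = Delta K T e f := by
  simpa using lcToCP_eq_sum (T := T) (e := fun _ : Unit => e) (g := fun _ => f) fun _ => ⟨he, hf⟩

theorem regularRep_lcToCP_one {f : X → K} (hf : f ∈ LcSet K X) :
    regularRep T (lcToCP T f) 1 = f := by
  obtain ⟨n, e, g, hg, rfl⟩ := exists_isLcEFamily_sum_eq (T := T) hf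
  rw [lcToCP_eq_sum hg, map_sum, LinearMap.sum_apply]
  exact Finset.sum_congr rfl fun i _ => regularRep_Delta_one T (hg i).1 (hg i).2

variable (T) in
theorem lcToCP_injOn : InjOn (lcToCP T) (LcSet K X) := fun f hf g hg hfg => by
  rw [← regularRep_lcToCP_one (T := T) hf, hfg, regularRep_lcToCP_one hg]

end CrossedProduct

/-- There is an injective algebra homomorphism
`φ : L_c(X) → L_c(X) ⋊ S` with `φ(f) = f Δ_e` whenever `e ∈ E(S)` and
`f ∈ L_c(X_e)`.  (`φ` is recorded as a map on all of `X → K`; homomorphism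
properties and injectivity are asserted on `L_c(X)`.) -/
theorem lc_embeds_in_crossed_product
    {K S X : Type*} [Field K] [InverseSemigroup S] [TopologicalSpace X]
    (T : AmpleSystem S X) :
    ∃ φ : (X → K) → CP K T,
      (∀ f ∈ LcSet K X, ∀ g ∈ LcSet K X, φ (f + g) = φ f + φ g) ∧
      (∀ (c : K), ∀ f ∈ LcSet K X, φ (c • f) = c • φ f) ∧
      (∀ f ∈ LcSet K X, ∀ g ∈ LcSet K X, φ (f * g) = φ f * φ g) ∧
      (∀ f ∈ LcSet K X, ∀ g ∈ LcSet K X, φ f = φ g → f = g) ∧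
      (∀ e : S, e * e = e → ∀ f ∈ LcE K T e, φ f = Delta K T e f) := by
  refine ⟨lcToCP T, fun f hf g hg => lcToCP_add hf hg, fun c f hf => lcToCP_smul c hf,
    fun f hf g hg => lcToCP_mul hf hg, fun f hf g hg => lcToCP_injOn T hf hg,
    fun e he f hf => lcToCP_of_mem_LcE he hf⟩
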